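/- arXiv:1404.2117 — 7 statements merged into one kernel-verified Lean document; each statement's English description precedes it below -/
import Mathlib

section
/- For every integer k ≥ 1 and all integers j₁, …, j_{2k} with j₁ + ⋯ + j_{2k} = 0, the coefficient N is invariant under cyclic permutation of its indices: N_{j₁ j₂ … j_{2k}} = N_{j₂ j₃ … j_{2k} j₁}. -/
open scoped BigOperators

/-- `f(n) = n (n+j₁)(n+j₁+j₂)⋯(n+j₁+⋯+j_{2k-1})`. -/
noncomputable def prodPoly (k : ℕ) (j : Fin (2 * k) → ℤ) (n : ℤ) : ℤ :=
  ∏ m : Fin (2 * k), (n + ∑ i ∈ Finset.Iio m, j i)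

/-- `N_{j₁…j_{2k}} = Σ_{n ∈ ℤ} (|f(n)| − f(n))` (a finite sum). -/
noncomputable def Ncoef (k : ℕ) (j : Fin (2 * k) → ℤ) : ℤ :=
  ∑ᶠ n : ℤ, (|prodPoly k j n| - prodPoly k j n)

lemma finRotate_val {N : ℕ} (i : Fin N) :
    ((finRotate N) i).val = (i.val + 1) % N := by
  rcases N with _ | M
  · exact i.elim0
  rw [coe_finRotate]
  split_ifs with h
  · subst h; simp [Fin.last]
  · have hlt : i.val < M :=
      lt_of_le_of_ne (Nat.lt_succ_iff.mp i.isLt) (fun hc => h (Fin.ext hc))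
    rw [Nat.mod_eq_of_lt (by omega)]

/-- Sum over `Finset.Iio m` in `Fin N` as a sum over a range of naturals. -/
lemma sum_Iio_fin {N : ℕ} (g : Fin N → ℤ) (g' : ℕ → ℤ) (m : Fin N)
    (hg : ∀ i : Fin N, i < m → g i = g' i.val) :
    ∑ i ∈ Finset.Iio m, g i = ∑ i ∈ Finset.range m.val, g' i := by
  rw [← Nat.Iio_eq_range, ← Fin.map_valEmbedding_Iio, Finset.sum_map]
  exact Finset.sum_congr rfl fun i hi => hg i (Finset.mem_Iio.mp hi)

lemma sum_rot_Iio (k : ℕ) (hk : 1 ≤ k) (j : Fin (2 * k) → ℤ)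
    (hj : ∑ i, j i = 0) (m : Fin (2 * k)) :
    ∑ i ∈ Finset.Iio m, j (finRotate (2 * k) i)
      = (∑ i ∈ Finset.Iio (finRotate (2 * k) m), j i) - j ⟨0, by omega⟩ := by
  set a : ℕ → ℤ := fun i => if h : i < 2 * k then j ⟨i, h⟩ else 0 with ha
  have h0 : a 0 = j ⟨0, by omega⟩ := by simp only [ha]; rw [dif_pos (by omega)]
  have hstot : ∑ i ∈ Finset.range (2 * k), a i = 0 := by
    rw [← Fin.sum_univ_eq_sum_range, ← hj]
    exact Finset.sum_congr rfl fun i _ => by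
      simp only [ha]; rw [dif_pos i.isLt]
  -- LHS
  have hL : ∑ i ∈ Finset.Iio m, j (finRotate (2 * k) i)
      = ∑ i ∈ Finset.range m.val, a (i + 1) := by
    apply sum_Iio_fin
    intro i him
    have hi1 : i.val + 1 < 2 * k := by
      have := him; rw [Fin.lt_def] at this
      have := m.isLt; omega
    have hv : ((finRotate (2 * k)) i).val = i.val + 1 := by
      rw [finRotate_val, Nat.mod_eq_of_lt hi1]
    simp only [ha]
    rw [dif_pos hi1]
    congr 1
    exact Fin.ext hv
  rcases Nat.lt_or_ge (m.val + 1) (2 * k) with hm | hm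
  · have hrot : (finRotate (2 * k) m : ℕ) = m.val + 1 := by
      rw [finRotate_val, Nat.mod_eq_of_lt hm]
    have hR : ∑ i ∈ Finset.Iio (finRotate (2 * k) m), j i
        = ∑ i ∈ Finset.range (m.val + 1), a i := by
      rw [sum_Iio_fin j a _ (fun i _ => by
        simp only [ha]; rw [dif_pos i.isLt]), hrot]
    rw [hL, hR, Finset.sum_range_succ', h0]
    ring
  · have hmval : m.val = 2 * k - 1 := by have := m.isLt; omega
    have hrot : finRotate (2 * k) m = ⟨0, by omega⟩ := by
      apply Fin.ext
      rw [finRotate_val, hmval]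
      have : 2 * k - 1 + 1 = 2 * k := by omega
      rw [this, Nat.mod_self]
    rw [hL, hrot]
    have hempty : Finset.Iio (⟨0, by omega⟩ : Fin (2 * k)) = ∅ := by
      apply Finset.eq_empty_of_forall_notMem
      intro i hi
      rw [Finset.mem_Iio, Fin.lt_def] at hi
      exact Nat.not_lt_zero _ hi
    rw [hempty, Finset.sum_empty]
    have h2k : 2 * k = 2 * k - 1 + 1 := by omega
    have hsucc : ∑ i ∈ Finset.range (2 * k), a i
        = ∑ i ∈ Finset.range m.val, a (i + 1) + a 0 := by
      conv_lhs => rw [h2k]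
      rw [Finset.sum_range_succ', hmval]
    rw [hstot, h0] at hsucc
    linarith

lemma prodPoly_rotate (k : ℕ) (hk : 1 ≤ k) (j : Fin (2 * k) → ℤ)
    (hj : ∑ i, j i = 0) (n : ℤ) :
    prodPoly k (j ∘ finRotate (2 * k)) n = prodPoly k j (n - j ⟨0, by omega⟩) := by
  unfold prodPoly
  refine Fintype.prod_equiv (finRotate (2 * k)) _ _ fun m => ?_
  rw [Function.comp_def, sum_rot_Iio k hk j hj m]
  ring

/-- `N_{j₁ j₂ … j_{2k}} = N_{j₂ j₃ … j_{2k} j₁}`: invariance under cyclic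
permutation of the indices. -/
theorem Ncoef_cyclic (k : ℕ) (hk : 1 ≤ k) (j : Fin (2 * k) → ℤ)
    (hj : ∑ i, j i = 0) :
    Ncoef k j = Ncoef k (j ∘ finRotate (2 * k)) := by
  unfold Ncoef
  calc ∑ᶠ n : ℤ, (|prodPoly k j n| - prodPoly k j n)
      = ∑ᶠ n : ℤ, (|prodPoly k j ((Equiv.subRight (j ⟨0, by omega⟩)) n)|
          - prodPoly k j ((Equiv.subRight (j ⟨0, by omega⟩)) n)) :=
        (finsum_comp_equiv (Equiv.subRight (j ⟨0, by omega⟩))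
          (f := fun n => |prodPoly k j n| - prodPoly k j n)).symm
    _ = ∑ᶠ n : ℤ, (|prodPoly k (j ∘ finRotate (2 * k)) n|
          - prodPoly k (j ∘ finRotate (2 * k)) n) := by
        apply finsum_congr
        intro n
        rw [prodPoly_rotate k hk j hj n]
        rfl
end

section
/- For every integer k ≥ 1 and all integers j₁, …, j_{2k} with j₁ + ⋯ + j_{2k} = 0, the full symmetrization over S_{2k} reduces to a symmetrization over the first 2k−1 indices: Z_{j₁…j_{2k}} = (1/(2k−1)!) Σ_{π ∈ S_{2k−1}} N_{j_{π(1)} … j_{π(2k−1)} j_{2k}}, where S_{2k−1} is the set of permutations of {1, …, 2k−1}. -/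
open scoped BigOperators

/-- The symmetrized coefficients `Z_{j₁…j_{2k}}`. -/
noncomputable def Zcoef (k : ℕ) (j : Fin (2 * k) → ℤ) : ℚ :=
  if ∑ i, j i = 0 then
    (1 / (Nat.factorial (2 * k) : ℚ)) *
      ∑ π : Equiv.Perm (Fin (2 * k)), (Ncoef k (j ∘ π) : ℚ)
  else 0

/-!
Rotating the indices, `j ↦ (j₂, …, j_{2k}, j₁)`, permutes the factors of `f` and, because the
`jᵢ` sum to zero, shifts its argument by `j₁`; so `N` is invariant under rotation. Every
permutation of the `2k` indices is uniquely a permutation fixing the last index followed by a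
power of the rotation, hence the sum over `S_{2k}` is `2k` times the sum over `S_{2k-1}`.
-/

open Finset

namespace Fin

variable {n : ℕ} {M : Type*} [CommMonoid M]

@[to_additive]
theorem prod_Iio_succ (f : Fin (n + 1) → M) (a : Fin n) :
    ∏ i < a.succ, f i = f 0 * ∏ i < a, f i.succ := by
  rw [← Ico_bot, bot_eq_zero, ← Ioo_insert_left (succ_pos a), prod_insert (by simp),
    ← map_succEmb_Iio, prod_map]
  rfl

@[to_additive]
theorem prod_Iio_last (f : Fin (n + 1) → M) : ∏ i < last n, f i = ∏ i : Fin n, f i.castSucc := by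
  rw [Iio_last_eq_map, prod_map]
  rfl

end Fin

theorem sum_Iio_comp_finRotate {M : Type*} [AddCommGroup M] {n : ℕ} [NeZero n] (j : Fin n → M)
    (hj : ∑ i, j i = 0) (m : Fin n) :
    ∑ i < m, j (finRotate n i) = ∑ i < finRotate n m, j i - j 0 := by
  obtain ⟨n, rfl⟩ := Nat.exists_eq_add_one_of_ne_zero (NeZero.ne n)
  have hrot (i : Fin n) : finRotate (n + 1) i.castSucc = i.succ := by
    rw [finRotate_apply, Fin.coeSucc_eq_succ]
  cases m using Fin.lastCases with
  | last =>
    rw [Fin.sum_univ_succ] at hj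
    have hempty : Iio (0 : Fin (n + 1)) = ∅ := Iio_bot
    rw [Fin.sum_Iio_last, finRotate_last, hempty, sum_empty, zero_sub, eq_neg_iff_add_eq_zero,
      add_comm]
    simpa only [hrot] using hj
  | cast a =>
    rw [Fin.sum_Iio_castSucc, hrot, Fin.sum_Iio_succ]
    simp only [hrot, add_sub_cancel_left]

theorem finRotate_pow_apply {n : ℕ} (a i : Fin n) : (finRotate n ^ (a : ℕ)) i = i + a := by
  obtain ⟨n, rfl⟩ := Nat.exists_eq_add_one_of_ne_zero a.pos.ne'
  induction a using Fin.induction with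
  | zero => simp
  | succ a ih =>
    rw [Fin.val_succ, pow_succ', Equiv.Perm.mul_apply, ← Fin.val_castSucc, ih, finRotate_apply,
      add_assoc, Fin.coeSucc_eq_succ]

theorem prodPoly_comp_finRotate (k : ℕ) [NeZero (2 * k)] (j : Fin (2 * k) → ℤ)
    (hj : ∑ i, j i = 0) (n : ℤ) :
    prodPoly k (j ∘ finRotate (2 * k)) n = prodPoly k j (n - j 0) := by
  rw [prodPoly, prodPoly, ← Equiv.prod_comp (finRotate (2 * k)) fun m ↦ n - j 0 + ∑ i < m, j i]
  refine prod_congr rfl fun m _ ↦ ?_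
  rw [Function.comp_def, sum_Iio_comp_finRotate j hj]
  ring

theorem Ncoef_comp_finRotate (k : ℕ) (j : Fin (2 * k) → ℤ) (hj : ∑ i, j i = 0) :
    Ncoef k (j ∘ finRotate (2 * k)) = Ncoef k j := by
  rcases eq_or_ne k 0 with rfl | hk
  · rfl
  have : NeZero (2 * k) := ⟨by positivity⟩
  simp only [Ncoef, prodPoly_comp_finRotate k j hj]
  exact finsum_comp_equiv (Equiv.subRight (j 0)) (f := fun n ↦ |prodPoly k j n| - prodPoly k j n)

theorem Ncoef_comp_finRotate_pow (k : ℕ) (j : Fin (2 * k) → ℤ) (hj : ∑ i, j i = 0) (a : ℕ) :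
    Ncoef k (j ∘ ⇑(finRotate (2 * k) ^ a)) = Ncoef k j := by
  induction a with
  | zero => rfl
  | succ a ih =>
    rw [pow_succ, Equiv.Perm.coe_mul, ← Function.comp_assoc,
      Ncoef_comp_finRotate k (j ∘ ⇑(finRotate (2 * k) ^ a)) ((Equiv.sum_comp _ j).trans hj), ih]

namespace Equiv.Perm

variable {m : ℕ}

def extendLast : Perm (Fin (m - 1)) →* Perm (Fin m) :=
  extendDomainHom (Fin.castLEquiv (Nat.sub_le m 1))

theorem extendLast_apply (π : Perm (Fin (m - 1))) (i : Fin m) :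
    extendLast π i =
      if h : (i : ℕ) < m - 1 then Fin.castLE (Nat.sub_le m 1) (π ⟨i, h⟩) else i := by
  split_ifs with h
  · exact extendDomain_apply_subtype (p := fun i : Fin m ↦ (i : ℕ) < m - 1) π _ h
  · exact extendDomain_apply_not_subtype (p := fun i : Fin m ↦ (i : ℕ) < m - 1) π _ h

theorem extendLast_injective : Function.Injective (extendLast (m := m)) :=
  extendDomainHom_injective _

theorem extendLast_apply_eq_neg_one_iff [NeZero m] (π : Perm (Fin (m - 1))) (i : Fin m) :
    extendLast π i = -1 ↔ i = -1 := by
  have hfix : extendLast π (-1) = -1 := by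
    obtain ⟨n, rfl⟩ := Nat.exists_eq_add_one_of_ne_zero (NeZero.ne m)
    rw [extendLast_apply, dif_neg (by simp [Fin.coe_neg_one])]
  conv_lhs => rw [← hfix, (extendLast π).injective.eq_iff]

theorem bijective_extendLast_mul_finRotate_pow [NeZero m] :
    Function.Bijective fun p : Perm (Fin (m - 1)) × Fin m ↦
      extendLast p.1 * finRotate m ^ (p.2 : ℕ) := by
  rw [Fintype.bijective_iff_injective_and_card]
  refine ⟨fun ⟨π, a⟩ ⟨π', b⟩ h ↦ ?_, ?_⟩
  · dsimp only at h
    -- both sides send `-1 - a` to `-1`, and only `-1` is mapped to `-1` by `extendLast π'`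
    have hab : a = b := by
      have h' := congr($h (-1 - a))
      rwa [mul_apply, mul_apply, finRotate_pow_apply, finRotate_pow_apply, sub_add_cancel,
        (extendLast_apply_eq_neg_one_iff π _).2 rfl, eq_comm, extendLast_apply_eq_neg_one_iff,
        sub_add, sub_eq_self, sub_eq_zero] at h'
    subst hab
    rw [extendLast_injective (mul_right_cancel h)]
  · rw [Fintype.card_prod, Fintype.card_perm, Fintype.card_perm, Fintype.card_fin,
      Fintype.card_fin, mul_comm, Nat.mul_factorial_pred (NeZero.ne m)]

end Equiv.Perm

/-- The full symmetrization over `S_{2k}` reduces to symmetrization over the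
first `2k−1` indices, the last index being fixed:
`Z_{j₁…j_{2k}} = (1/(2k−1)!) Σ_{π ∈ S_{2k−1}} N_{j_{π(1)} … j_{π(2k−1)} j_{2k}}`. -/
theorem Zcoef_eq_partial_symmetrization (k : ℕ) (hk : 1 ≤ k)
    (j : Fin (2 * k) → ℤ) (hj : ∑ i, j i = 0) :
    Zcoef k j = (1 / (Nat.factorial (2 * k - 1) : ℚ)) *
      ∑ π : Equiv.Perm (Fin (2 * k - 1)),
        (Ncoef k (fun i =>
          if h : (i : ℕ) < 2 * k - 1 then
            j (Fin.castLE (Nat.sub_le _ _) (π ⟨(i : ℕ), h⟩))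
          else j i) : ℚ) := by
  have : NeZero (2 * k) := ⟨by omega⟩
  have hext (π : Equiv.Perm (Fin (2 * k - 1))) : (fun i : Fin (2 * k) ↦
      if h : (i : ℕ) < 2 * k - 1 then j (Fin.castLE (Nat.sub_le _ _) (π ⟨(i : ℕ), h⟩)) else j i)
      = j ∘ Equiv.Perm.extendLast π :=
    funext fun i ↦ by simp only [Function.comp_apply, Equiv.Perm.extendLast_apply, apply_dite j]
  have hrot (σ : Equiv.Perm (Fin (2 * k))) (a : ℕ) :
      Ncoef k (j ∘ ⇑(σ * finRotate (2 * k) ^ a)) = Ncoef k (j ∘ σ) :=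
    Ncoef_comp_finRotate_pow k (j ∘ σ) ((Equiv.sum_comp σ j).trans hj) a
  rw [Zcoef, if_pos hj, ← Equiv.Perm.bijective_extendLast_mul_finRotate_pow.sum_comp,
    Fintype.sum_prod_type]
  simp only [hrot, hext, sum_const, card_univ, Fintype.card_fin, nsmul_eq_mul, ← mul_sum]
  rw [← Nat.mul_factorial_pred (NeZero.ne (2 * k))]
  push_cast
  field_simp
end

section
/- If a : ℝ → ℝ is a smooth 2π-periodic real-valued function, then for every integer k ≥ 1 the zeta-invariant Z_k(a) is a real number, i.e., the (complex) sum Z_k(a) = Σ_{j₁,…,j_{2k}} Z_{j₁…j_{2k}} â_{j₁} ⋯ â_{j_{2k}} has zero imaginary part. -/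
open scoped BigOperators

/-- Fourier coefficients `â_n = (1/(2π)) ∫₀^{2π} e^{-inθ} a(θ) dθ`. -/
noncomputable def fourierCoef (a : ℝ → ℂ) (n : ℤ) : ℂ :=
  (1 / (2 * Real.pi)) *
    ∫ θ in (0 : ℝ)..(2 * Real.pi), Complex.exp (-Complex.I * n * θ) * a θ

lemma prodPoly_neg (k : ℕ) (j : Fin (2 * k) → ℤ) (n : ℤ) :
    prodPoly k (fun i => -j i) n = prodPoly k j (-n) := by
  unfold prodPoly
  have h : ∀ m ∈ (Finset.univ : Finset (Fin (2 * k))),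
      (n + ∑ i ∈ Finset.Iio m, -j i) = (-1 : ℤ) * (-n + ∑ i ∈ Finset.Iio m, j i) := by
    intro m _
    rw [Finset.sum_neg_distrib]
    ring
  rw [Finset.prod_congr rfl h, Finset.prod_mul_distrib, Finset.prod_const,
    Finset.card_univ, Fintype.card_fin, pow_mul, neg_one_sq, one_pow, one_mul]

lemma Ncoef_neg (k : ℕ) (j : Fin (2 * k) → ℤ) :
    Ncoef k (fun i => -j i) = Ncoef k j := by
  unfold Ncoef
  simp only [prodPoly_neg]
  exact finsum_comp (g := fun n : ℤ => |prodPoly k j n| - prodPoly k j n)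
    (fun n : ℤ => -n) (neg_involutive.bijective)

lemma Zcoef_neg (k : ℕ) (j : Fin (2 * k) → ℤ) :
    Zcoef k (fun i => -j i) = Zcoef k j := by
  unfold Zcoef
  have hc : (∑ i, -j i = 0) ↔ (∑ i, j i = 0) := by
    rw [Finset.sum_neg_distrib, neg_eq_zero]
  by_cases h : ∑ i, j i = 0
  · rw [if_pos (hc.mpr h), if_pos h]
    congr 1
    refine Finset.sum_congr rfl fun π _ => ?_
    congr 1
    have : (fun i => -j i) ∘ π = fun i => -((j ∘ π) i) := rfl
    rw [this, Ncoef_neg]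
  · rw [if_neg (fun hz => h (hc.mp hz)), if_neg h]

lemma intervalIntegral_conj {f : ℝ → ℂ} {a b : ℝ} :
    ∫ x in a..b, (starRingEnd ℂ) (f x) = (starRingEnd ℂ) (∫ x in a..b, f x) := by
  simp only [intervalIntegral, integral_conj, map_sub]

lemma fourierCoef_conj (a : ℝ → ℝ) (n : ℤ) :
    (starRingEnd ℂ) (fourierCoef (fun θ => (a θ : ℂ)) n) =
      fourierCoef (fun θ => (a θ : ℂ)) (-n) := by
  unfold fourierCoef
  rw [map_mul, ← intervalIntegral_conj]
  congr 1
  · simp [map_div₀, map_mul, Complex.conj_ofReal, map_ofNat]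
  · refine intervalIntegral.integral_congr fun θ _ => ?_
    rw [map_mul, ← Complex.exp_conj, Complex.conj_ofReal]
    congr 1
    simp only [map_mul, Complex.conj_ofReal, map_neg, Complex.conj_I, map_intCast]
    push_cast
    ring

/-- For a smooth `2π`-periodic real-valued `a`, the zeta-invariant
`Z_k(a) = Σ_{j₁,…,j_{2k}} Z_{j₁…j_{2k}} â_{j₁} ⋯ â_{j_{2k}}` is real. -/
theorem zetaInvariant_real (k : ℕ) (hk : 1 ≤ k) (a : ℝ → ℝ)
    (ha : ContDiff ℝ (⊤ : ℕ∞) a) (hper : Function.Periodic a (2 * Real.pi)) :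
    (∑' j : Fin (2 * k) → ℤ,
      (Zcoef k j : ℂ) * ∏ i, fourierCoef (fun θ => (a θ : ℂ)) (j i)).im = 0 := by
  have hterm : ∀ j : Fin (2 * k) → ℤ,
      (starRingEnd ℂ) ((Zcoef k j : ℂ) * ∏ i, fourierCoef (fun θ => (a θ : ℂ)) (j i)) =
        (Zcoef k (-j) : ℂ) * ∏ i, fourierCoef (fun θ => (a θ : ℂ)) ((-j) i) := by
    intro j
    simp only [map_mul, map_prod]
    congr 1
    · rw [show (-j : Fin (2 * k) → ℤ) = fun i => -j i from rfl, Zcoef_neg]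
      exact map_ratCast (starRingEnd ℂ) _
    · exact Finset.prod_congr rfl fun i _ => fourierCoef_conj a (j i)
  set g : (Fin (2 * k) → ℤ) → ℂ :=
    fun j => (Zcoef k j : ℂ) * ∏ i, fourierCoef (fun θ => (a θ : ℂ)) (j i) with hg
  have key : (starRingEnd ℂ) (∑' j, g j) = ∑' j, g j := by
    calc (starRingEnd ℂ) (∑' j, g j) = ∑' j, (starRingEnd ℂ) (g j) := by
          simp only [← Complex.star_def]
          exact tsum_star
      _ = ∑' j, g (-j) := tsum_congr fun j => hterm j
      _ = ∑' j, g j := (Equiv.neg (Fin (2 * k) → ℤ)).tsum_eq g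
  exact Complex.conj_eq_iff_im.mp key
end

section
/- (Linear relations among zeta-coefficients) For every integer k ≥ 1 and all integers j₁, …, j_{2k} with j₁ + ⋯ + j_{2k} = −1, one has Σ_{α=1}^{2k} (j_α − 1) · Z_{j₁, …, j_{α−1}, j_α + 1, j_{α+1}, …, j_{2k}} = 0, where Z are the symmetrized zeta-coefficients extended by zero to tuples with nonzero sum. -/
open scoped BigOperators

/-!
Fix an ordering `c` with `∑ c = -1`, partial sums `S_m = c_0 + ⋯ + c_{m-1}`, and write
`φ(x) = |x| - x`. For `b = 0, …, 2k` the shifts `S_m + [b ≤ m]` give products `g_b` with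
`g_0(n) = f_c(n + 1)` and `g_{2k} = f_c`, while `g_{β+1}` is `f` for `c` with `c_β` raised by one.
Passing from `g_β` to `g_{β+1}` moves one factor from `u + 1` to `u = n + S_β`, and
`u φ((u + 1) C) = (u + 1) φ(u C)` then shows that the moments `V_b = Σ_n (n + S_b) φ(g_b(n))`
satisfy `V_{β+1} - V_β = (c_β - 1) N_{c + e_β}`. The relation for `N` telescopes to
`V_{2k} - V_0 = 0`, both ends being `Σ_n (n - 1) φ(f_c(n))` (shift `n` by one in `V_0`), and
averaging it over all orderings gives the relation for `Z`.
-/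

open Finset Function

section ShiftedProducts

variable {ι : Type*} [Fintype ι]

def shiftDefect (a : ι → ℤ) (n : ℤ) : ℤ :=
  |∏ m, (n + a m)| - ∏ m, (n + a m)

-- For `|n| > ∑ |a m|` all factors have the sign of `n`, and there is an even number of them.
theorem hasFiniteSupport_shiftDefect (hι : Even (Fintype.card ι)) (a : ι → ℤ) :
    (shiftDefect a).HasFiniteSupport := by
  set B := ∑ m, |a m|
  have hB : ∀ m, |a m| ≤ B := fun m => single_le_sum (fun i _ => abs_nonneg (a i)) (mem_univ m)
  refine (Set.finite_Icc (-B) B).subset fun n hn => ?_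
  by_contra hout
  have hsign : (∀ m, 0 ≤ n + a m) ∨ ∀ m, n + a m ≤ 0 := by
    rcases le_or_gt n B with hn | hn
    · refine .inr fun m => ?_
      have : n < -B := by by_contra h; exact hout ⟨not_lt.mp h, hn⟩
      linarith [le_abs_self (a m), hB m]
    · exact .inl fun m => by linarith [neg_abs_le (a m), hB m]
  refine hn (sub_eq_zero.mpr (abs_of_nonneg ?_))
  rcases hsign with hpos | hneg
  · exact prod_nonneg fun m _ => hpos m
  · rw [← prod_congr rfl fun m _ => neg_neg (n + a m), prod_neg, card_univ, hι.neg_one_pow,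
      one_mul]
    exact prod_nonneg fun m _ => neg_nonneg.mpr (hneg m)

theorem shiftDefect_add_const (a : ι → ℤ) (t n : ℤ) :
    shiftDefect (fun m => a m + t) n = shiftDefect a (n + t) := by
  simp only [shiftDefect, add_assoc, add_comm t]

theorem mul_abs_sub_succ_mul (u C : ℤ) :
    u * (|(u + 1) * C| - (u + 1) * C) = (u + 1) * (|u * C| - u * C) := by
  have h : u * |u + 1| = (u + 1) * |u| := by
    rcases le_or_gt 0 u with h | h
    · rw [abs_of_nonneg h, abs_of_nonneg (by omega : (0 : ℤ) ≤ u + 1)]; ring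
    · rw [abs_of_nonpos (by omega : u + 1 ≤ 0), abs_of_nonpos h.le]; ring
  rw [abs_mul, abs_mul]
  linear_combination |C| * h

variable [DecidableEq ι]

theorem prod_add_update (a : ι → ℤ) (β : ι) (y n : ℤ) :
    ∏ m, (n + update a β y m) = (n + y) * ∏ m ∈ univ.erase β, (n + a m) := by
  rw [← mul_prod_erase _ _ (mem_univ β), update_self]
  congr 1
  exact prod_congr rfl fun m hm => by rw [update_of_ne (ne_of_mem_erase hm)]

theorem mul_shiftDefect_update_succ (a : ι → ℤ) (β : ι) (x n : ℤ) :
    (n + x) * shiftDefect (update a β (x + 1)) n =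
      (n + x + 1) * shiftDefect (update a β x) n := by
  simp only [shiftDefect, prod_add_update, ← add_assoc]
  exact mul_abs_sub_succ_mul (n + x) _

end ShiftedProducts

section Interpolation

variable {N : ℕ} (c : Fin N → ℤ)

def partialSum (b : ℕ) : ℤ :=
  ∑ i ∈ univ.filter fun i : Fin N => (i : ℕ) < b, c i

theorem sum_Iio_eq_partialSum (m : Fin N) : ∑ i ∈ Iio m, c i = partialSum c m := by
  rw [partialSum]
  congr 1
  ext i
  simp only [mem_Iio, mem_filter, mem_univ, true_and, Fin.lt_def]

theorem partialSum_zero : partialSum c 0 = 0 := by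
  simp [partialSum]

theorem partialSum_of_le {b : ℕ} (h : N ≤ b) : partialSum c b = ∑ i, c i := by
  rw [partialSum, filter_true_of_mem fun i _ => i.isLt.trans_le h]

theorem partialSum_succ (β : Fin N) : partialSum c (β + 1) = partialSum c β + c β := by
  have hfilter : univ.filter (fun i : Fin N => (i : ℕ) < β + 1) =
      insert β (univ.filter fun i : Fin N => (i : ℕ) < β) := by
    ext i
    simp only [mem_filter, mem_univ, true_and, mem_insert, Fin.ext_iff]
    omega
  rw [partialSum, hfilter, sum_insert (by simp), add_comm, partialSum]

theorem partialSum_update (β : Fin N) (y : ℤ) (b : ℕ) :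
    partialSum (update c β y) b = partialSum c b + if (β : ℕ) < b then y - c β else 0 := by
  unfold partialSum
  split_ifs with h
  · have hβ : β ∈ univ.filter fun i : Fin N => (i : ℕ) < b := by simpa using h
    rw [sum_update_of_mem hβ, sum_eq_add_sum_sdiff_singleton_of_mem hβ c]
    ring
  · have hβ : β ∉ univ.filter fun i : Fin N => (i : ℕ) < b := by simpa using h
    rw [sum_update_of_notMem hβ, add_zero]

def interpShift (b : ℕ) (m : Fin N) : ℤ :=
  partialSum c m + if b ≤ (m : ℕ) then 1 else 0

theorem interpShift_eq_update (β : Fin N) :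
    interpShift c β = update (interpShift c (β + 1)) β (partialSum c β + 1) := by
  funext m
  rcases eq_or_ne m β with rfl | hne
  · simp [interpShift]
  · have hval : (m : ℕ) ≠ β := Fin.val_ne_of_ne hne
    simp only [interpShift, update_of_ne hne]
    congr 1
    split_ifs <;> omega

theorem update_interpShift_succ (β : Fin N) :
    update (interpShift c (β + 1)) β (partialSum c β) = interpShift c (β + 1) :=
  update_eq_self_iff.mpr (by simp [interpShift])

noncomputable def interpMoment (b : ℕ) : ℤ :=
  ∑ᶠ n, (n + partialSum c b) * shiftDefect (interpShift c b) n

theorem interpMoment_succ_sub (hN : Even N) (β : Fin N) :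
    interpMoment c (β + 1) - interpMoment c β =
      (c β - 1) * ∑ᶠ n, shiftDefect (interpShift c (β + 1)) n := by
  set A := interpShift c (β + 1)
  have hstep (n : ℤ) : (n + partialSum c β) * shiftDefect (interpShift c β) n =
      (n + partialSum c β + 1) * shiftDefect A n := by
    rw [interpShift_eq_update c β, mul_shiftDefect_update_succ, update_interpShift_succ]
  have hA := hasFiniteSupport_shiftDefect (by simpa using hN) A
  rw [interpMoment, interpMoment, finsum_congr hstep,
    ← finsum_sub_distrib (hA.fun_mul_right _) (hA.fun_mul_right _), mul_finsum]
  refine finsum_congr fun n => ?_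
  rw [partialSum_succ]
  ring

theorem interpMoment_zero :
    interpMoment c 0 = ∑ᶠ n, (n - 1) * shiftDefect (fun m : Fin N => partialSum c m) n := by
  have hshift (n : ℤ) : (n + partialSum c 0) * shiftDefect (interpShift c 0) n =
      (n + 1 - 1) * shiftDefect (fun m : Fin N => partialSum c m) (n + 1) := by
    have h0 : interpShift c 0 = fun m : Fin N => partialSum c m + 1 := by
      funext m
      simp [interpShift]
    rw [h0, shiftDefect_add_const, partialSum_zero, add_zero, add_sub_cancel_right]
  rw [interpMoment, finsum_congr hshift]
  exact finsum_comp_equiv (Equiv.addRight (1 : ℤ))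
    (f := fun n => (n - 1) * shiftDefect (fun m : Fin N => partialSum c m) n)

theorem interpMoment_of_le {b : ℕ} (h : N ≤ b) :
    interpMoment c b =
      ∑ᶠ n, (n + ∑ i, c i) * shiftDefect (fun m : Fin N => partialSum c m) n := by
  have hshift : interpShift c b = fun m : Fin N => partialSum c m := by
    funext m
    simp [interpShift, (m.isLt.trans_le h).not_ge]
  rw [interpMoment, hshift, partialSum_of_le c h]

theorem sum_mul_finsum_shiftDefect_interpShift_eq_zero (hN : Even N) (hc : ∑ i, c i = -1) :
    ∑ β : Fin N, (c β - 1) * ∑ᶠ n, shiftDefect (interpShift c (β + 1)) n = 0 := by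
  simp_rw [← interpMoment_succ_sub c hN]
  rw [Fin.sum_univ_eq_sum_range (fun b => interpMoment c (b + 1) - interpMoment c b),
    sum_range_sub, interpMoment_of_le c le_rfl, interpMoment_zero, hc]
  simp [sub_eq_add_neg]

end Interpolation

theorem Ncoef_eq_finsum_shiftDefect (k : ℕ) (j : Fin (2 * k) → ℤ) :
    Ncoef k j = ∑ᶠ n, shiftDefect (fun m : Fin (2 * k) => partialSum j m) n := by
  simp only [Ncoef, prodPoly, shiftDefect, sum_Iio_eq_partialSum]

theorem Ncoef_update_succ (k : ℕ) (c : Fin (2 * k) → ℤ) (β : Fin (2 * k)) :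
    Ncoef k (update c β (c β + 1)) = ∑ᶠ n, shiftDefect (interpShift c (β + 1)) n := by
  have hshift : (fun m : Fin (2 * k) => partialSum (update c β (c β + 1)) m) =
      interpShift c (β + 1) := by
    funext m
    simp only [partialSum_update, interpShift, add_sub_cancel_left, Nat.lt_iff_add_one_le]
  rw [Ncoef_eq_finsum_shiftDefect, hshift]

theorem Ncoef_linear_relations (k : ℕ) (c : Fin (2 * k) → ℤ) (hc : ∑ i, c i = -1) :
    ∑ β, (c β - 1) * Ncoef k (update c β (c β + 1)) = 0 := by
  simp only [Ncoef_update_succ]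
  exact sum_mul_finsum_shiftDefect_interpShift_eq_zero c (even_two_mul k) hc

theorem Ncoef_comp_perm_linear_relations (k : ℕ) (j : Fin (2 * k) → ℤ) (hj : ∑ i, j i = -1)
    (π : Equiv.Perm (Fin (2 * k))) :
    ∑ α, (j α - 1) * Ncoef k (update j α (j α + 1) ∘ π) = 0 := by
  rw [← Equiv.sum_comp π]
  simp only [update_comp_equiv, Equiv.symm_apply_apply]
  exact Ncoef_linear_relations k (j ∘ π) ((Equiv.sum_comp π j).trans hj)

theorem sum_update_add {ι M : Type*} [Fintype ι] [DecidableEq ι] [AddCommMonoid M]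
    (j : ι → M) (α : ι) (x : M) : ∑ i, update j α (j α + x) i = ∑ i, j i + x := by
  rw [sum_update_of_mem (mem_univ α), sum_eq_add_sum_sdiff_singleton_of_mem (mem_univ α) j]
  exact add_right_comm _ _ _

theorem Zcoef_linear_relations_general (k : ℕ) (j : Fin (2 * k) → ℤ)
    (hj : ∑ i, j i = -1) :
    ∑ α : Fin (2 * k),
      ((j α : ℚ) - 1) * Zcoef k (Function.update j α (j α + 1)) = 0 := by
  have hZ (α : Fin (2 * k)) : Zcoef k (update j α (j α + 1)) = 1 / ((2 * k).factorial : ℚ) *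
      ∑ π : Equiv.Perm (Fin (2 * k)), (Ncoef k (update j α (j α + 1) ∘ π) : ℚ) := by
    rw [Zcoef, if_pos (by rw [sum_update_add, hj, neg_add_cancel])]
  calc ∑ α, ((j α : ℚ) - 1) * Zcoef k (update j α (j α + 1))
      = 1 / ((2 * k).factorial : ℚ) *
          ∑ π : Equiv.Perm (Fin (2 * k)),
            ((∑ α, (j α - 1) * Ncoef k (update j α (j α + 1) ∘ π) : ℤ) : ℚ) := by
        simp only [hZ, mul_sum, Int.cast_sum, Int.cast_mul, Int.cast_sub, Int.cast_one]
        rw [sum_comm]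
        exact sum_congr rfl fun _ _ => sum_congr rfl fun _ _ => by ring
    _ = 0 := by
        simp only [Ncoef_comp_perm_linear_relations k j hj, Int.cast_zero, sum_const_zero, mul_zero]

/-- Linear relations among zeta-coefficients: for `j₁ + ⋯ + j_{2k} = −1`,
`Σ_{α=1}^{2k} (j_α − 1) Z_{j₁,…,j_{α−1}, j_α+1, j_{α+1},…, j_{2k}} = 0`. -/
theorem Zcoef_linear_relations (k : ℕ) (hk : 1 ≤ k) (j : Fin (2 * k) → ℤ)
    (hj : ∑ i, j i = -1) :
    ∑ α : Fin (2 * k),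
      ((j α : ℚ) - 1) * Zcoef k (Function.update j α (j α + 1)) = 0 :=
  Zcoef_linear_relations_general k j hj
end

section
/- (Lemma 7.3) Every quadruple of integers (i, j, k, ℓ) with i + j + k + ℓ = 0 can be transformed, by a permutation of its four entries possibly followed by a simultaneous sign change of all four entries, into a quadruple (i′, j′, k′, ℓ′) with ℓ′ = −(i′ + j′ + k′) satisfying either Case 1: i′ ≥ 0, j′ ≥ 0, k′ ≥ 0; or Case 2: i′ ≤ 0, j′ ≥ 0, k′ ≥ 0, i′ + j′ ≤ 0, i′ + k′ ≤ 0, i′ + j′ + k′ ≥ 0. -/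
open scoped BigOperators

/-!
Sort the quadruple as `a ≤ b ≤ c ≤ d`. If `0 ≤ b` then `(b, c, d)` is in Case 1, and if `c ≤ 0`
then so is `(-a, -b, -c)`. Otherwise `b < 0 < c`, and the sign of `a + d` decides between the
Case 2 triples `(a, c, d)` (when `a + d ≤ 0`) and `(-d, -b, -a)` (when `0 < a + d`); the last
entry is then fixed by the vanishing sum.
-/

/-- The two admissible shapes of `(i′, j′, k′)`: Case 1 on the left, Case 2 on the right. -/
def NormalTriple (i j k : ℤ) : Prop :=
  (0 ≤ i ∧ 0 ≤ j ∧ 0 ≤ k) ∨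
    (i ≤ 0 ∧ 0 ≤ j ∧ 0 ≤ k ∧ i + j ≤ 0 ∧ i + k ≤ 0 ∧ 0 ≤ i + j + k)

lemma normalTriple_of_sorted {a b c d : ℤ} (hab : a ≤ b) (hbc : b ≤ c) (hcd : c ≤ d)
    (hsum : a + b + c + d = 0) :
    NormalTriple b c d ∨ NormalTriple (-a) (-b) (-c) ∨ NormalTriple a c d ∨
      NormalTriple (-d) (-b) (-a) := by
  unfold NormalTriple
  by_cases hb : 0 ≤ b
  · left; left; omega
  by_cases hc : c ≤ 0
  · right; left; left; omega
  by_cases had : a + d ≤ 0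
  · right; right; left; right; omega
  · right; right; right; right; omega

lemma exists_normalTriple_of_monotone (w : Fin 4 → ℤ) (hw : Monotone w) (hsum : ∑ i, w i = 0) :
    ∃ (σ : Equiv.Perm (Fin 4)) (e : ℤ), (e = 1 ∨ e = -1) ∧
      NormalTriple (e * w (σ 0)) (e * w (σ 1)) (e * w (σ 2)) := by
  rw [Fin.sum_univ_four] at hsum
  rcases normalTriple_of_sorted (hw (by decide : (0 : Fin 4) ≤ 1))
      (hw (by decide : (1 : Fin 4) ≤ 2)) (hw (by decide : (2 : Fin 4) ≤ 3)) hsum with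
    h | h | h | h
  · exact ⟨finRotate 4, 1, Or.inl rfl, by simpa using h⟩
  · exact ⟨1, -1, Or.inr rfl, by simpa using h⟩
  · exact ⟨Equiv.swap 1 2 * Equiv.swap 2 3, 1, Or.inl rfl, by simpa [Equiv.swap_apply_def] using h⟩
  · exact ⟨Equiv.swap 0 3 * Equiv.swap 2 3, -1, Or.inr rfl,
      by simpa [Equiv.swap_apply_def] using h⟩

lemma exists_perm_sign_normalTriple (v : Fin 4 → ℤ) (hv : ∑ i, v i = 0) :
    ∃ (σ : Equiv.Perm (Fin 4)) (e : ℤ), (e = 1 ∨ e = -1) ∧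
      NormalTriple (e * v (σ 0)) (e * v (σ 1)) (e * v (σ 2)) := by
  set τ := Tuple.sort v
  obtain ⟨σ, e, he, h⟩ := exists_normalTriple_of_monotone (v ∘ τ) (Tuple.monotone_sort v)
    (by rw [← hv]; exact Equiv.sum_comp τ v)
  exact ⟨σ.trans τ, e, he, h⟩

/-- Lemma 7.3: every quadruple of integers summing to zero can be brought, by
a permutation of its entries possibly followed by a simultaneous sign change,
to a quadruple `(i′, j′, k′, ℓ′)` with `ℓ′ = −(i′+j′+k′)` satisfying either
Case 1: `i′, j′, k′ ≥ 0`, or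
Case 2: `i′ ≤ 0`, `j′, k′ ≥ 0`, `i′+j′ ≤ 0`, `i′+k′ ≤ 0`, `i′+j′+k′ ≥ 0`. -/
theorem quadruple_normal_form (v : Fin 4 → ℤ) (hv : ∑ i, v i = 0) :
    ∃ (σ : Equiv.Perm (Fin 4)) (e : ℤ), (e = 1 ∨ e = -1) ∧
      e * v (σ 3) = -(e * v (σ 0) + e * v (σ 1) + e * v (σ 2)) ∧
      ((0 ≤ e * v (σ 0) ∧ 0 ≤ e * v (σ 1) ∧ 0 ≤ e * v (σ 2)) ∨
       (e * v (σ 0) ≤ 0 ∧ 0 ≤ e * v (σ 1) ∧ 0 ≤ e * v (σ 2) ∧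
        e * v (σ 0) + e * v (σ 1) ≤ 0 ∧ e * v (σ 0) + e * v (σ 2) ≤ 0 ∧
        0 ≤ e * v (σ 0) + e * v (σ 1) + e * v (σ 2))) := by
  obtain ⟨σ, e, he, h⟩ := exists_perm_sign_normalTriple v hv
  have hσ : v (σ 0) + v (σ 1) + v (σ 2) + v (σ 3) = 0 := by
    rw [← Fin.sum_univ_four (fun i => v (σ i)), Equiv.sum_comp σ v, hv]
  exact ⟨σ, e, he, by linear_combination e * hσ, h⟩
end

section
/- (Theorem 7.1, Case 1) Let i, j, k be nonnegative integers and ℓ = −(i + j + k). Then the symmetrized coefficient Z_{ijkℓ} = (1/6)(N_{ijkℓ} + N_{ikjℓ} + N_{jikℓ} + N_{jkiℓ} + N_{kijℓ} + N_{kjiℓ}) equals P₁(i, j, k) = (1/90) Σ_{(a,b,c)} g(a, b, c), where the sum is over all 6 ordered permutations (a,b,c) of (i,j,k) and g(i, j, k) = 3i⁵ + 15i⁴j + 10i³j² + 10i³jk − 5i³ − 25i²j − 10ijk + 2i. -/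
/-!
For `a, b, c ≥ 0` the quartic `f(n) = n(n+a)(n+a+b)(n+a+b+c)` has the roots
`0 ≥ -a ≥ -(a+b) ≥ -(a+b+c)` and is negative exactly on `(-a, 0)` and `(-(a+b+c), -(a+b))`.
After `n ↦ -n`, `N_{abcd}` is therefore `-2` times the sum of `m(m-a)(m-a-b)(m-a-b-c)` over
`[0, a) ∪ [a+b, a+b+c)`, which Faulhaber's formulas turn into a polynomial in `a, b, c`
(independent of `d`). Summing it over the six permutations gives `P₁`.
-/

/-- `N_{j₁j₂j₃j₄} = Σ_{n∈ℤ} (|f(n)| − f(n))` with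
`f(n) = n(n+j₁)(n+j₁+j₂)(n+j₁+j₂+j₃)` (a finite sum). -/
noncomputable def N4 (j₁ j₂ j₃ j₄ : ℤ) : ℤ :=
  ∑ᶠ n : ℤ, (|n * (n + j₁) * (n + j₁ + j₂) * (n + j₁ + j₂ + j₃)|
    - n * (n + j₁) * (n + j₁ + j₂) * (n + j₁ + j₂ + j₃))

/-- The polynomial `g` of Theorem 7.1, Case 1. -/
def gPoly (i j k : ℤ) : ℤ :=
  3 * i ^ 5 + 15 * i ^ 4 * j + 10 * i ^ 3 * j ^ 2 + 10 * i ^ 3 * j * k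
    - 5 * i ^ 3 - 25 * i ^ 2 * j - 10 * i * j * k + 2 * i

open Finset

def rootQuartic {R : Type*} [CommRing R] (p q r x : R) : R :=
  x * (x - p) * (x - q) * (x - r)

theorem sixty_mul_sum_range_rootQuartic {R : Type*} [CommRing R] (p q r : R) (n : ℕ) :
    60 * ∑ m ∈ range n, rootQuartic p q r (m : R)
      = 2 * n * (n - 1) * (2 * n - 1) * (3 * n ^ 2 - 3 * n - 1)
        - 15 * (p + q + r) * n ^ 2 * (n - 1) ^ 2
        + 10 * (p * q + p * r + q * r) * n * (n - 1) * (2 * n - 1)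
        - 30 * p * q * r * n * (n - 1) := by
  induction n with
  | zero => simp
  | succ n ih =>
    rw [sum_range_succ, mul_add, ih, rootQuartic]
    push_cast
    ring

section Sign

variable {R : Type*} [CommRing R] [LinearOrder R] [IsStrictOrderedRing R] {p q r x : R}

theorem rootQuartic_nonneg_of_nonpos (hx : x ≤ 0) (hp : 0 ≤ p) (hq : 0 ≤ q) (hr : 0 ≤ r) :
    0 ≤ rootQuartic p q r x :=
  mul_nonneg_of_nonpos_of_nonpos
    (mul_nonpos_of_nonneg_of_nonpos
      (mul_nonneg_of_nonpos_of_nonpos hx (by linarith)) (by linarith)) (by linarith)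

theorem rootQuartic_nonneg_of_roots_le (hx : 0 ≤ x) (hp : p ≤ x) (hq : q ≤ x) (hr : r ≤ x) :
    0 ≤ rootQuartic p q r x :=
  mul_nonneg (mul_nonneg (mul_nonneg hx (by linarith)) (by linarith)) (by linarith)

theorem rootQuartic_nonpos_of_le_roots (hx : 0 ≤ x) (hp : x ≤ p) (hq : x ≤ q) (hr : x ≤ r) :
    rootQuartic p q r x ≤ 0 :=
  mul_nonpos_of_nonneg_of_nonpos
    (mul_nonneg_of_nonpos_of_nonpos
      (mul_nonpos_of_nonneg_of_nonpos hx (by linarith)) (by linarith)) (by linarith)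

theorem rootQuartic_nonneg_of_mem_Icc_mid (hx : 0 ≤ x) (hp : p ≤ x) (hq : x ≤ q) (hr : x ≤ r) :
    0 ≤ rootQuartic p q r x :=
  mul_nonneg_of_nonpos_of_nonpos
    (mul_nonpos_of_nonneg_of_nonpos (mul_nonneg hx (by linarith)) (by linarith)) (by linarith)

theorem rootQuartic_nonpos_of_mem_Icc_last (hx : 0 ≤ x) (hp : p ≤ x) (hq : q ≤ x) (hr : x ≤ r) :
    rootQuartic p q r x ≤ 0 :=
  mul_nonpos_of_nonneg_of_nonpos (mul_nonneg (mul_nonneg hx (by linarith)) (by linarith))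
    (by linarith)

end Sign

theorem sum_range_abs_sub_rootQuartic {p q r : ℕ} (hpq : p ≤ q) (hqr : q ≤ r) :
    ∑ m ∈ range r, (|rootQuartic (p : ℤ) q r m| - rootQuartic (p : ℤ) q r m)
      = 2 * (∑ m ∈ range q, rootQuartic (p : ℤ) q r m - ∑ m ∈ range p, rootQuartic (p : ℤ) q r m
        - ∑ m ∈ range r, rootQuartic (p : ℤ) q r m) := by
  set G : ℕ → ℤ := fun m => rootQuartic (p : ℤ) q r m
  have on_neg {m : ℕ} (h : G m ≤ 0) : |G m| - G m = -2 * G m := by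
    rw [abs_of_nonpos h]; ring
  have on_pos {m : ℕ} (h : 0 ≤ G m) : |G m| - G m = 0 := by
    rw [abs_of_nonneg h, sub_self]
  have below_p : ∑ m ∈ range p, (|G m| - G m) = -2 * ∑ m ∈ range p, G m := by
    rw [mul_sum]
    refine sum_congr rfl fun m hm => on_neg (rootQuartic_nonpos_of_le_roots ?_ ?_ ?_ ?_) <;>
      simp only [mem_range] at hm <;> omega
  have between_p_q : ∑ m ∈ Ico p q, (|G m| - G m) = 0 := by
    refine sum_eq_zero fun m hm => on_pos (rootQuartic_nonneg_of_mem_Icc_mid ?_ ?_ ?_ ?_) <;>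
      simp only [mem_Ico] at hm <;> omega
  have between_q_r : ∑ m ∈ Ico q r, (|G m| - G m) = -2 * ∑ m ∈ Ico q r, G m := by
    rw [mul_sum]
    refine sum_congr rfl fun m hm => on_neg (rootQuartic_nonpos_of_mem_Icc_last ?_ ?_ ?_ ?_) <;>
      simp only [mem_Ico] at hm <;> omega
  rw [← sum_range_add_sum_Ico _ hqr, ← sum_range_add_sum_Ico _ hpq, below_p, between_p_q,
    between_q_r, ← sum_range_add_sum_Ico G hqr]
  ring

theorem N4_eq_sum_range (a b c : ℕ) (d : ℤ) :
    N4 a b c d = ∑ m ∈ range (a + b + c),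
      (|rootQuartic (a : ℤ) ↑(a + b) ↑(a + b + c) m|
        - rootQuartic (a : ℤ) ↑(a + b) ↑(a + b + c) m) := by
  set G : ℤ → ℤ := rootQuartic (a : ℤ) ↑(a + b) ↑(a + b + c)
  have support_sub : (Function.support fun m => |G m| - G m)
      ⊆ ((range (a + b + c)).map Nat.castEmbedding : Finset ℤ) := by
    intro m hm
    have hneg : G m < 0 := by
      by_contra! h
      exact hm (show |G m| - G m = 0 by rw [abs_of_nonneg h, sub_self])
    have hm0 : 0 ≤ m := by
      by_contra! h
      exact hneg.not_ge (rootQuartic_nonneg_of_nonpos h.le (by positivity) (by positivity)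
        (by positivity))
    lift m to ℕ using hm0
    have hmr : m < a + b + c := by
      by_contra! h
      exact hneg.not_ge
        (rootQuartic_nonneg_of_roots_le (by positivity) (by omega) (by omega) (by omega))
    simpa using hmr
  have reflect (m : ℤ) : -m * (-m + a) * (-m + a + b) * (-m + a + b + c) = G m := by
    simp only [G, rootQuartic]; push_cast; ring
  rw [N4, ← finsum_comp_equiv (Equiv.neg ℤ),
    finsum_congr fun m => by rw [Equiv.neg_apply, reflect],
    finsum_eq_finsetSum_of_support_subset _ support_sub, sum_map]
  rfl

theorem thirty_mul_N4 (a b c : ℕ) (d : ℤ) :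
    30 * N4 a b c d
      = 3 * a ^ 5 + 10 * a ^ 4 * b + 5 * a ^ 4 * c + 10 * a ^ 3 * b ^ 2 + 10 * a ^ 3 * b * c
        - 5 * a ^ 3 - 10 * a ^ 2 * b - 5 * a ^ 2 * c - 10 * a * b ^ 2 - 10 * a * b * c + 2 * a
      + (3 * c ^ 5 + 10 * c ^ 4 * b + 5 * c ^ 4 * a + 10 * c ^ 3 * b ^ 2 + 10 * c ^ 3 * b * a
        - 5 * c ^ 3 - 10 * c ^ 2 * b - 5 * c ^ 2 * a - 10 * c * b ^ 2 - 10 * c * b * a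
        + 2 * c) := by
  have faulhaber := sixty_mul_sum_range_rootQuartic (a : ℤ) ↑(a + b) ↑(a + b + c)
  have hp := faulhaber a
  have hq := faulhaber (a + b)
  have hr := faulhaber (a + b + c)
  rw [N4_eq_sum_range, sum_range_abs_sub_rootQuartic (by omega) (by omega)]
  push_cast at hp hq hr ⊢
  linear_combination hq - hp - hr

theorem zetaCoef_case1_general (i j k : ℤ) (hi : 0 ≤ i) (hj : 0 ≤ j) (hk : 0 ≤ k)
    (l : ℤ) :
    ((N4 i j k l + N4 i k j l + N4 j i k l + N4 j k i l + N4 k i j l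
        + N4 k j i l : ℤ) : ℚ) / 6
      = (1 / 90) * ((gPoly i j k + gPoly i k j + gPoly j i k + gPoly j k i
        + gPoly k i j + gPoly k j i : ℤ) : ℚ) := by
  lift i to ℕ using hi
  lift j to ℕ using hj
  lift k to ℕ using hk
  have closed_form (a b c : ℕ) := congrArg (Int.cast : ℤ → ℚ) (thirty_mul_N4 a b c l)
  simp only [gPoly]
  push_cast at closed_form ⊢
  linear_combination (closed_form i j k + closed_form i k j + closed_form j i k
    + closed_form j k i + closed_form k i j + closed_form k j i) / 180

/-- Theorem 7.1, Case 1: for `i, j, k ≥ 0` and `ℓ = −(i+j+k)`, the symmetrized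
coefficient `Z_{ijkℓ} = (1/6)(N_{ijkℓ}+N_{ikjℓ}+N_{jikℓ}+N_{jkiℓ}+N_{kijℓ}+N_{kjiℓ})`
equals `P₁(i,j,k) = (1/90) Σ_{(a,b,c)} g(a,b,c)`, summed over the 6 ordered
permutations `(a,b,c)` of `(i,j,k)`. -/
theorem zetaCoef_case1 (i j k : ℤ) (hi : 0 ≤ i) (hj : 0 ≤ j) (hk : 0 ≤ k)
    (l : ℤ) (hl : l = -(i + j + k)) :
    ((N4 i j k l + N4 i k j l + N4 j i k l + N4 j k i l + N4 k i j l
        + N4 k j i l : ℤ) : ℚ) / 6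
      = (1 / 90) * ((gPoly i j k + gPoly i k j + gPoly j i k + gPoly j k i
        + gPoly k i j + gPoly k j i : ℤ) : ℚ) :=
  zetaCoef_case1_general i j k hi hj hk l
end

section
/- (Theorem 7.1, Case 2) Let i, j, k be integers with i ≤ 0, j ≥ 0, k ≥ 0, i + j ≤ 0, i + k ≤ 0 and i + j + k ≥ 0, and let ℓ = −(i + j + k). Then the symmetrized coefficient Z_{ijkℓ} = (1/6)(N_{ijkℓ} + N_{ikjℓ} + N_{jikℓ} + N_{jkiℓ} + N_{kijℓ} + N_{kjiℓ}) equals P₂(i, j, k) = (1/90)(h(i, j, k) + h(i, k, j)), where h(i, j, k) = 5i⁵ + 25i⁴j + 10i³j² + 20i³jk − 10i²j³ − 15ij⁴ − 20ij³k − 4j⁵ − 5j⁴k + 10j³k² − 5i³ − 15i²j + 5ij² − 5j²k + 4j. -/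
set_option linter.unusedVariables false

/-- The polynomial `h` of Theorem 7.1, Case 2. -/
def hPoly (i j k : ℤ) : ℤ :=
  5 * i ^ 5 + 25 * i ^ 4 * j + 10 * i ^ 3 * j ^ 2 + 20 * i ^ 3 * j * k
    - 10 * i ^ 2 * j ^ 3 - 15 * i * j ^ 4 - 20 * i * j ^ 3 * k
    - 4 * j ^ 5 - 5 * j ^ 4 * k + 10 * j ^ 3 * k ^ 2
    - 5 * i ^ 3 - 15 * i ^ 2 * j + 5 * i * j ^ 2 - 5 * j ^ 2 * k + 4 * j

open Finset

/-!
For a monic quartic `f` with integer roots `a ≤ b ≤ c ≤ d`, the summand `|f(n)| - f(n)` equals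
`-2 f(n)` on the two intervals `(a, b]` and `(c, d]` where `f ≤ 0`, and vanishes elsewhere. Each
`N` in the symmetrization is of this form, with roots `0, -j₁, -(j₁+j₂), -(j₁+j₂+j₃)`, and the
hypotheses of Case 2 determine the order of these roots for each of the six permutations. Summing
`f` over an interval by telescoping an explicit antiderivative then turns `Z` into a polynomial
identity.
-/

def quartic {R : Type*} [CommRing R] (a b c d x : R) : R :=
  (x - a) * (x - b) * (x - c) * (x - d)

@[simp, norm_cast]
lemma Int.cast_quartic (a b c d x : ℤ) :
    ((quartic a b c d x : ℤ) : ℚ) = quartic (a : ℚ) b c d x := by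
  simp [quartic]

lemma sub_mul_sub_nonpos {R : Type*} [Ring R] [LinearOrder R] [IsStrictOrderedRing R]
    {a b x : R} (hax : a ≤ x) (hxb : x ≤ b) : (x - a) * (x - b) ≤ 0 :=
  mul_nonpos_of_nonneg_of_nonpos (sub_nonneg.2 hax) (sub_nonpos.2 hxb)

lemma sub_mul_sub_nonneg {R : Type*} [Ring R] [LinearOrder R] [IsStrictOrderedRing R]
    {a b x : R} (hab : a ≤ b) (hx : x ≤ a ∨ b ≤ x) : 0 ≤ (x - a) * (x - b) := by
  rcases hx with hx | hx
  · exact mul_nonneg_of_nonpos_of_nonpos (sub_nonpos.2 hx) (sub_nonpos.2 (hx.trans hab))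
  · exact mul_nonneg (sub_nonneg.2 (hab.trans hx)) (sub_nonneg.2 hx)

lemma quartic_eq_mul {R : Type*} [CommRing R] (a b c d x : R) :
    quartic a b c d x = ((x - a) * (x - b)) * ((x - c) * (x - d)) := by
  rw [quartic]; ring

section Sign

variable {R : Type*} [CommRing R] [LinearOrder R] [IsStrictOrderedRing R] {a b c d x : R}

lemma quartic_nonpos_of_mem_left (hbc : b ≤ c) (hcd : c ≤ d) (hax : a ≤ x) (hxb : x ≤ b) :
    quartic a b c d x ≤ 0 := by
  rw [quartic_eq_mul]
  exact mul_nonpos_of_nonpos_of_nonneg (sub_mul_sub_nonpos hax hxb)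
    (sub_mul_sub_nonneg hcd (Or.inl (hxb.trans hbc)))

lemma quartic_nonpos_of_mem_right (hab : a ≤ b) (hbc : b ≤ c) (hcx : c ≤ x) (hxd : x ≤ d) :
    quartic a b c d x ≤ 0 := by
  rw [quartic_eq_mul]
  exact mul_nonpos_of_nonneg_of_nonpos (sub_mul_sub_nonneg hab (Or.inr (hbc.trans hcx)))
    (sub_mul_sub_nonpos hcx hxd)

lemma quartic_nonneg_of_le_left (hab : a ≤ b) (hbc : b ≤ c) (hcd : c ≤ d) (hx : x ≤ a) :
    0 ≤ quartic a b c d x := by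
  rw [quartic_eq_mul]
  exact mul_nonneg (sub_mul_sub_nonneg hab (Or.inl hx))
    (sub_mul_sub_nonneg hcd (Or.inl (hx.trans (hab.trans hbc))))

lemma quartic_nonneg_of_mem_middle (hab : a ≤ b) (hcd : c ≤ d) (hbx : b ≤ x) (hxc : x ≤ c) :
    0 ≤ quartic a b c d x := by
  rw [quartic_eq_mul]
  exact mul_nonneg (sub_mul_sub_nonneg hab (Or.inr hbx)) (sub_mul_sub_nonneg hcd (Or.inl hxc))

lemma quartic_nonneg_of_le_right (hab : a ≤ b) (hbc : b ≤ c) (hcd : c ≤ d) (hx : d ≤ x) :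
    0 ≤ quartic a b c d x := by
  rw [quartic_eq_mul]
  exact mul_nonneg (sub_mul_sub_nonneg hab (Or.inr ((hbc.trans hcd).trans hx)))
    (sub_mul_sub_nonneg hcd (Or.inr hx))

end Sign

lemma finsum_abs_sub_self_quartic {a b c d : ℤ} (hab : a ≤ b) (hbc : b ≤ c) (hcd : c ≤ d) :
    ∑ᶠ n : ℤ, (|quartic a b c d n| - quartic a b c d n)
      = -2 * (∑ n ∈ Ioc a b, quartic a b c d n + ∑ n ∈ Ioc c d, quartic a b c d n) := by
  set f := quartic a b c d
  have hnonneg : ∀ n, n ∉ Ioc a b ∪ Ioc c d → 0 ≤ f n := by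
    intro n hn
    simp only [mem_union, mem_Ioc, not_or, not_and_or, not_lt, not_le] at hn
    rcases le_or_gt n a with h | h
    · exact quartic_nonneg_of_le_left hab hbc hcd h
    rcases le_or_gt d n with h' | h'
    · exact quartic_nonneg_of_le_right hab hbc hcd h'
    exact quartic_nonneg_of_mem_middle hab hcd (by omega) (by omega)
  have hnonpos : ∀ n ∈ Ioc a b ∪ Ioc c d, f n ≤ 0 := by
    intro n hn
    rcases mem_union.1 hn with h | h <;> rw [mem_Ioc] at h
    · exact quartic_nonpos_of_mem_left hbc hcd h.1.le h.2
    · exact quartic_nonpos_of_mem_right hab hbc h.1.le h.2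
  have hsupp : Function.support (fun n => |f n| - f n) ⊆ ↑(Ioc a b ∪ Ioc c d) := by
    intro n hn
    by_contra hmem
    exact hn (by simp [abs_of_nonneg (hnonneg n hmem)])
  have hdisj : Disjoint (Ioc a b) (Ioc c d) :=
    disjoint_left.2 fun n h h' => by rw [mem_Ioc] at h h'; omega
  rw [finsum_eq_sum_of_support_subset _ hsupp,
    sum_congr rfl fun n hn => by rw [abs_of_nonpos (hnonpos n hn)], sum_union hdisj,
    mul_add, mul_sum, mul_sum]
  congr 1 <;> exact sum_congr rfl fun n _ => by ring

lemma sum_Ioc_eq_sub_of_forall_sub_eq {M : Type*} [AddCommGroup M] {F g : ℤ → M}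
    (hF : ∀ x, F x - F (x - 1) = g x) {a b : ℤ} (hab : a ≤ b) :
    ∑ n ∈ Ioc a b, g n = F b - F a := by
  induction b, hab using Int.leInduction with
  | base => simp
  | succ b hab ih =>
    rw [← insert_Ioc_right_eq_Ioc_add_one hab, sum_insert (by simp), ih, ← hF, add_sub_cancel_right]
    abel

-- `Σ_{m=1}^x` of `(m-a)(m-b)(m-c)(m-d)`, expanded in the elementary symmetric polynomials of
-- the roots and summed by Faulhaber's formulas for `Σ m^k`, `k ≤ 4`.
def quarticAntideriv (a b c d x : ℚ) : ℚ :=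
  x * (x + 1) * (2 * x + 1) * (3 * x ^ 2 + 3 * x - 1) / 30
    - (a + b + c + d) * (x * (x + 1) / 2) ^ 2
    + (a * b + a * c + a * d + b * c + b * d + c * d) * (x * (x + 1) * (2 * x + 1) / 6)
    - (a * b * c + a * b * d + a * c * d + b * c * d) * (x * (x + 1) / 2)
    + a * b * c * d * x

lemma quarticAntideriv_sub (a b c d x : ℚ) :
    quarticAntideriv a b c d x - quarticAntideriv a b c d (x - 1) = quartic a b c d x := by
  simp only [quarticAntideriv, quartic]; ring

lemma N4_eq_of_roots (j₁ j₂ j₃ j₄ a b c d : ℤ)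
    (hroots : ∀ n, n * (n + j₁) * (n + j₁ + j₂) * (n + j₁ + j₂ + j₃) = quartic a b c d n)
    (hab : a ≤ b) (hbc : b ≤ c) (hcd : c ≤ d) :
    (N4 j₁ j₂ j₃ j₄ : ℚ) = -2 * (quarticAntideriv a b c d b - quarticAntideriv a b c d a
      + quarticAntideriv a b c d d - quarticAntideriv a b c d c) := by
  have hF (x : ℤ) : quarticAntideriv a b c d x - quarticAntideriv a b c d ↑(x - 1)
      = quartic (a : ℚ) b c d x := by
    push_cast; exact quarticAntideriv_sub _ _ _ _ _
  simp only [N4, hroots, finsum_abs_sub_self_quartic hab hbc hcd]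
  push_cast
  simp only [sum_Ioc_eq_sub_of_forall_sub_eq hF hab, sum_Ioc_eq_sub_of_forall_sub_eq hF hcd]
  ring

theorem zetaCoef_case2_general (i j k : ℤ) (hj : 0 ≤ j) (hk : 0 ≤ k)
    (hij : i + j ≤ 0) (hik : i + k ≤ 0) (hijk : 0 ≤ i + j + k)
    (l : ℤ) :
    ((N4 i j k l + N4 i k j l + N4 j i k l + N4 j k i l + N4 k i j l
        + N4 k j i l : ℤ) : ℚ) / 6
      = (1 / 90) * ((hPoly i j k + hPoly i k j : ℤ) : ℚ) := by
  have e₁ := N4_eq_of_roots i j k l (-(i + j + k)) 0 (-(i + j)) (-i)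
    (fun n => by rw [quartic]; ring) (by omega) (by omega) (by omega)
  have e₂ := N4_eq_of_roots i k j l (-(i + j + k)) 0 (-(i + k)) (-i)
    (fun n => by rw [quartic]; ring) (by omega) (by omega) (by omega)
  have e₃ := N4_eq_of_roots j i k l (-j) (-(i + j + k)) 0 (-(i + j))
    (fun n => by rw [quartic]; ring) (by omega) (by omega) (by omega)
  have e₄ := N4_eq_of_roots j k i l (-(j + k)) (-j) (-(i + j + k)) 0
    (fun n => by rw [quartic]; ring) (by omega) (by omega) (by omega)
  have e₅ := N4_eq_of_roots k i j l (-k) (-(i + j + k)) 0 (-(i + k))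
    (fun n => by rw [quartic]; ring) (by omega) (by omega) (by omega)
  have e₆ := N4_eq_of_roots k j i l (-(j + k)) (-k) (-(i + j + k)) 0
    (fun n => by rw [quartic]; ring) (by omega) (by omega) (by omega)
  push_cast [e₁, e₂, e₃, e₄, e₅, e₆]
  simp only [quarticAntideriv, hPoly]
  push_cast
  ring

/-- Theorem 7.1, Case 2: for `i ≤ 0`, `j, k ≥ 0`, `i+j ≤ 0`, `i+k ≤ 0`,
`i+j+k ≥ 0` and `ℓ = −(i+j+k)`, the symmetrized coefficient
`Z_{ijkℓ} = (1/6)(N_{ijkℓ}+N_{ikjℓ}+N_{jikℓ}+N_{jkiℓ}+N_{kijℓ}+N_{kjiℓ})`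
equals `P₂(i,j,k) = (1/90)(h(i,j,k) + h(i,k,j))`. -/
theorem zetaCoef_case2 (i j k : ℤ) (hi : i ≤ 0) (hj : 0 ≤ j) (hk : 0 ≤ k)
    (hij : i + j ≤ 0) (hik : i + k ≤ 0) (hijk : 0 ≤ i + j + k)
    (l : ℤ) (hl : l = -(i + j + k)) :
    ((N4 i j k l + N4 i k j l + N4 j i k l + N4 j k i l + N4 k i j l
        + N4 k j i l : ℤ) : ℚ) / 6
      = (1 / 90) * ((hPoly i j k + hPoly i k j : ℤ) : ℚ) :=
  zetaCoef_case2_general i j k hj hk hij hik hijk l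
end
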